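/- arXiv:1906.06711 — 5 statements merged into one kernel-verified Lean document; each statement's English description precedes it below -/
import Mathlib

section
/- Let S ⊆ ℝ be an open interval, let F : ℝ → [0,1] be a twice continuously differentiable CDF with derivative f = F′ satisfying f(x) > 0 for all x ∈ S and F(S) = (0,1), and let F_h : ℝ → [0,1] be a twice continuously differentiable CDF with derivative f_h. Define the critical value cv(p) = F⁻¹(1−p) for p ∈ (0,1) and the rejection rate β(p) = 1 − F_h(cv(p)). If f_h′(x)·f(x) ≥ f′(x)·f_h(x) for all x ∈ S, then β is twice continuously differentiable on (0,1) with β″(p) ≤ 0 for all p ∈ (0,1); in particular, β is concave on (0,1). -/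
open Set Filter Topology

/-!
By the inverse function theorem `cv` is `C²` with `cv' = -1 / f ∘ cv`, so `β' = (f_h / f) ∘ cv`.
The hypothesis says exactly that the likelihood ratio `f_h / f` is nondecreasing on `S`, while
`cv` is decreasing; hence `β'' = (f_h / f)' ∘ cv · cv' ≤ 0`.
-/

theorem contDiffAt_of_comp_eq {n : WithTop ℕ∞} (hn : n ≠ 0) {F g h : ℝ → ℝ} {S : Set ℝ}
    {x₀ : ℝ} (hF : ContDiffAt ℝ n F (g x₀)) (hF' : deriv F (g x₀) ≠ 0) (hinj : InjOn F S)
    (hS : S ∈ 𝓝 (g x₀)) (hgS : ∀ᶠ x in 𝓝 x₀, g x ∈ S) (hh : ContDiffAt ℝ n h x₀)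
    (hFg : ∀ᶠ x in 𝓝 x₀, F (g x) = h x) : ContDiffAt ℝ n g x₀ := by
  have hFd : HasFDerivAt F
      ((ContinuousLinearEquiv.unitsEquivAut ℝ (Units.mk0 _ hF')) : ℝ →L[ℝ] ℝ) (g x₀) :=
    ((hF.differentiableAt hn).hasDerivAt).hasFDerivAt_equiv hF'
  set L := hF.localInverse hFd hn
  have hh₀ : h x₀ = F (g x₀) := hFg.self_of_nhds.symm
  have hL : ContDiffAt ℝ n (L ∘ h) x₀ := by
    refine ContDiffAt.comp x₀ ?_ hh
    rw [hh₀]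
    exact hF.to_localInverse hFd hn
  have hLh : Tendsto (L ∘ h) (𝓝 x₀) (𝓝 (g x₀)) := by
    simpa [hh₀, L, hF.localInverse_apply_image hFd hn] using hL.continuousAt.tendsto
  have hright : ∀ᶠ x in 𝓝 x₀, F (L (h x)) = h x :=
    hh.continuousAt.tendsto.eventually
      (hh₀ ▸ (hF.hasStrictFDerivAt' hFd hn).eventually_right_inverse)
  refine hL.congr_of_eventuallyEq ?_
  filter_upwards [hgS, hFg, hright, hLh.eventually_mem hS] with x hgx hFgx hFLx hLx
  exact hinj hgx hLx (hFgx.trans hFLx.symm)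

theorem hasDerivAt_of_comp_eq {F g h : ℝ → ℝ} {f' h' x₀ : ℝ} (hg : DifferentiableAt ℝ g x₀)
    (hF : HasDerivAt F f' (g x₀)) (hf' : f' ≠ 0) (hh : HasDerivAt h h' x₀)
    (hFg : ∀ᶠ x in 𝓝 x₀, F (g x) = h x) : HasDerivAt g (h' / f') x₀ := by
  have hchain : f' * deriv g x₀ = h' :=
    (hF.comp x₀ hg.hasDerivAt).unique (hh.congr_of_eventuallyEq hFg)
  rw [← hchain, mul_div_cancel_left₀ _ hf']
  exact hg.hasDerivAt

section Quantile

variable {S : Set ℝ} {F cv : ℝ → ℝ}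

theorem contDiffOn_quantile {n : WithTop ℕ∞} (hn : n ≠ 0) (hS_open : IsOpen S)
    (hS_conn : S.OrdConnected) (hF : ContDiff ℝ n F) (hf_pos : ∀ x ∈ S, 0 < deriv F x)
    (hcv_mem : ∀ p ∈ Ioo (0 : ℝ) 1, cv p ∈ S) (hcv_eq : ∀ p ∈ Ioo (0 : ℝ) 1, F (cv p) = 1 - p) :
    ContDiffOn ℝ n cv (Ioo 0 1) := by
  have hinj : InjOn F S :=
    (strictMonoOn_of_deriv_pos hS_conn.convex hF.continuous.continuousOn
      fun x hx => hf_pos x (interior_subset hx)).injOn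
  intro p hp
  have hIoo : Ioo (0 : ℝ) 1 ∈ 𝓝 p := isOpen_Ioo.mem_nhds hp
  refine (contDiffAt_of_comp_eq hn hF.contDiffAt (hf_pos _ (hcv_mem p hp)).ne' hinj
    (hS_open.mem_nhds (hcv_mem p hp)) (eventually_of_mem hIoo hcv_mem)
    (contDiffAt_const.sub contDiffAt_id) (eventually_of_mem hIoo hcv_eq)).contDiffWithinAt

theorem hasDerivAt_quantile {p : ℝ} (hp : p ∈ Ioo (0 : ℝ) 1) (hF : DifferentiableAt ℝ F (cv p))
    (hf : deriv F (cv p) ≠ 0) (hcv : DifferentiableAt ℝ cv p)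
    (hcv_eq : ∀ p ∈ Ioo (0 : ℝ) 1, F (cv p) = 1 - p) :
    HasDerivAt cv (-1 / deriv F (cv p)) p :=
  hasDerivAt_of_comp_eq hcv hF.hasDerivAt hf ((hasDerivAt_id p).const_sub 1)
    (eventually_of_mem (isOpen_Ioo.mem_nhds hp) hcv_eq)

theorem hasDerivAt_deriv_one_sub_comp_quantile {G : ℝ → ℝ} (hF : ContDiff ℝ 2 F)
    (hG : ContDiff ℝ 2 G) (hcv : ∀ p ∈ Ioo (0 : ℝ) 1, HasDerivAt cv (-1 / deriv F (cv p)) p)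
    (hf : ∀ p ∈ Ioo (0 : ℝ) 1, deriv F (cv p) ≠ 0) :
    ∀ p ∈ Ioo (0 : ℝ) 1, HasDerivAt (deriv fun q => 1 - G (cv q))
      ((deriv (deriv G) (cv p) * deriv F (cv p) - deriv G (cv p) * deriv (deriv F) (cv p)) /
        deriv F (cv p) ^ 2 * (-1 / deriv F (cv p))) p := by
  have hderiv : ∀ q ∈ Ioo (0 : ℝ) 1,
      deriv (fun q => 1 - G (cv q)) q = deriv G (cv q) / deriv F (cv q) := by
    intro q hq
    have hβ' : HasDerivAt (fun q => 1 - G (cv q)) _ q :=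
      ((hG.differentiable two_ne_zero _).hasDerivAt.comp q (hcv q hq)).const_sub 1
    rw [hβ'.deriv]
    field_simp [hf q hq]
  intro p hp
  have hratio := (hG.differentiable_deriv_two _).hasDerivAt.div
    (hF.differentiable_deriv_two _).hasDerivAt (hf p hp)
  exact (hratio.comp p (hcv p hp)).congr_of_eventuallyEq
    (eventually_of_mem (isOpen_Ioo.mem_nhds hp) hderiv)

end Quantile

theorem stmt_0_general
    (S : Set ℝ) (hS_open : IsOpen S) (hS_conn : S.OrdConnected)
    (F Fh : ℝ → ℝ)
    (hF_smooth : ContDiff ℝ 2 F)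
    (hf_pos : ∀ x ∈ S, 0 < deriv F x)
    (hFh_smooth : ContDiff ℝ 2 Fh)
    (cv : ℝ → ℝ)
    (hcv_mem : ∀ p ∈ Ioo (0 : ℝ) 1, cv p ∈ S)
    (hcv_eq : ∀ p ∈ Ioo (0 : ℝ) 1, F (cv p) = 1 - p)
    (hMLR : ∀ x ∈ S, deriv (deriv Fh) x * deriv F x ≥ deriv (deriv F) x * deriv Fh x)
    (β : ℝ → ℝ) (hβ : ∀ p, β p = 1 - Fh (cv p)) :
    ContDiffOn ℝ 2 β (Ioo 0 1) ∧
    (∀ p ∈ Ioo (0 : ℝ) 1, deriv (deriv β) p ≤ 0) ∧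
    ConcaveOn ℝ (Ioo 0 1) β := by
  obtain rfl : β = fun p => 1 - Fh (cv p) := funext hβ
  have hf : ∀ p ∈ Ioo (0 : ℝ) 1, 0 < deriv F (cv p) := fun p hp => hf_pos _ (hcv_mem p hp)
  have hcvC := contDiffOn_quantile two_ne_zero hS_open hS_conn hF_smooth hf_pos hcv_mem hcv_eq
  have hcv' : ∀ p ∈ Ioo (0 : ℝ) 1, HasDerivAt cv (-1 / deriv F (cv p)) p := fun p hp =>
    hasDerivAt_quantile hp (hF_smooth.differentiable two_ne_zero _) (hf p hp).ne'
      ((hcvC.contDiffAt (isOpen_Ioo.mem_nhds hp)).differentiableAt two_ne_zero) hcv_eq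
  have hβC : ContDiffOn ℝ 2 (fun p => 1 - Fh (cv p)) (Ioo 0 1) :=
    contDiffOn_const.sub (hFh_smooth.comp_contDiffOn hcvC)
  have hβ'' := hasDerivAt_deriv_one_sub_comp_quantile hF_smooth hFh_smooth hcv'
    fun q hq => (hf q hq).ne'
  have hβ''_nonpos : ∀ p ∈ Ioo (0 : ℝ) 1, deriv (deriv fun q => 1 - Fh (cv q)) p ≤ 0 := by
    intro p hp
    rw [(hβ'' p hp).deriv]
    have hnum : 0 ≤ deriv (deriv Fh) (cv p) * deriv F (cv p) -
        deriv Fh (cv p) * deriv (deriv F) (cv p) := by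
      rw [mul_comm (deriv Fh _)]
      exact sub_nonneg.2 (hMLR _ (hcv_mem p hp))
    exact mul_nonpos_of_nonneg_of_nonpos (by positivity)
      (div_nonpos_of_nonpos_of_nonneg (by norm_num) (hf p hp).le)
  refine ⟨hβC, hβ''_nonpos, concaveOn_of_deriv2_nonpos' (convex_Ioo 0 1)
    (hβC.differentiableOn two_ne_zero)
    (fun p hp => (hβ'' p hp).differentiableAt.differentiableWithinAt) ?_⟩
  simpa using hβ''_nonpos

/-- Let S be an open interval, F a twice continuously differentiable CDF with
density f = F′ positive on S and F(S) = (0,1), and F_h a twice continuously differentiable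
CDF with density f_h. Let cv(p) = F⁻¹(1−p) ∈ S for p ∈ (0,1) and β(p) = 1 − F_h(cv(p)).
If f_h′(x)·f(x) ≥ f′(x)·f_h(x) for all x ∈ S, then β is twice continuously differentiable
on (0,1) with β″(p) ≤ 0 there; in particular β is concave on (0,1). -/
theorem stmt_0
    (S : Set ℝ) (hS_open : IsOpen S) (hS_conn : S.OrdConnected)
    (F Fh : ℝ → ℝ)
    (hF_smooth : ContDiff ℝ 2 F)
    (hF_mono : Monotone F)
    (hF_bot : Tendsto F atBot (𝓝 0)) (hF_top : Tendsto F atTop (𝓝 1))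
    (hf_pos : ∀ x ∈ S, 0 < deriv F x)
    (hFS : F '' S = Ioo 0 1)
    (hFh_smooth : ContDiff ℝ 2 Fh)
    (hFh_mono : Monotone Fh)
    (hFh_bot : Tendsto Fh atBot (𝓝 0)) (hFh_top : Tendsto Fh atTop (𝓝 1))
    (cv : ℝ → ℝ)
    (hcv_mem : ∀ p ∈ Ioo (0 : ℝ) 1, cv p ∈ S)
    (hcv_eq : ∀ p ∈ Ioo (0 : ℝ) 1, F (cv p) = 1 - p)
    (hMLR : ∀ x ∈ S, deriv (deriv Fh) x * deriv F x ≥ deriv (deriv F) x * deriv Fh x)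
    (β : ℝ → ℝ) (hβ : ∀ p, β p = 1 - Fh (cv p)) :
    ContDiffOn ℝ 2 β (Ioo 0 1) ∧
    (∀ p ∈ Ioo (0 : ℝ) 1, deriv (deriv β) p ≤ 0) ∧
    ConcaveOn ℝ (Ioo 0 1) β :=
  stmt_0_general S hS_open hS_conn F Fh hF_smooth hf_pos hFh_smooth cv hcv_mem hcv_eq hMLR β hβ
end

section
/- Let S ⊆ ℝ be an open interval, let F : ℝ → [0,1] be a twice continuously differentiable CDF with derivative f = F′ satisfying f(x) > 0 for all x ∈ S and F(S) = (0,1). Let (H, 𝒜) be a measurable space, let {F_h}_{h ∈ H} be a family of twice continuously differentiable CDFs with derivatives f_h and second derivatives f_h′ uniformly bounded over h ∈ H, such that (x,h) ↦ F_h(x) is measurable in h, and suppose f_h′(x)·f(x) ≥ f′(x)·f_h(x) for all x ∈ S and all h ∈ H. Let Π be a probability measure on (H, 𝒜). Then the CDF of p-values G(p) = ∫_H (1 − F_h(F⁻¹(1−p))) dΠ(h) is concave on (0,1); equivalently, its derivative g (the p-curve) is continuously differentiable with g′(p) ≤ 0 for all p ∈ (0,1). -/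
open Set Filter Topology MeasureTheory

/-!
Write `f = F'`, `J p = ∫ f_h (cv p) dΠ` and `K p = ∫ f_h' (cv p) dΠ`. The critical value
`cv p = F⁻¹(1 - p)` has derivative `-1 / f (cv p)` by the inverse function theorem, and the uniform
bounds on `f_h`, `f_h'` allow differentiation under the integral, so `G' = J / f ∘ cv` and
`G'' = (f' (cv p) J p - K p f (cv p)) / f (cv p) ^ 3`. Integrating the likelihood ratio condition
`f_h' f ≥ f' f_h` against `Π` makes the numerator nonpositive, while `f > 0` on `S`.
-/

theorem measurable_deriv_apply {H : Type*} [MeasurableSpace H] {Φ : H → ℝ → ℝ}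
    (hΦ : ∀ h, Differentiable ℝ (Φ h)) (hΦ_meas : ∀ x, Measurable fun h => Φ h x) (x : ℝ) :
    Measurable fun h => deriv (Φ h) x := by
  have hseq : Tendsto (fun n : ℕ => x + ((n : ℝ) + 1)⁻¹) atTop (𝓝[≠] x) := by
    refine tendsto_nhdsWithin_of_tendsto_nhds_of_eventually_within _ ?_
      (Eventually.of_forall fun n => by simp [Nat.cast_add_one_ne_zero])
    simpa using tendsto_const_nhds.add (tendsto_one_div_add_atTop_nhds_zero_nat (𝕜 := ℝ))
  refine measurable_of_tendsto_metrizable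
    (fun n => ((hΦ_meas (x + ((n : ℝ) + 1)⁻¹)).sub (hΦ_meas x)).mul_const ((n : ℝ) + 1))
    (tendsto_pi_nhds.2 fun h => ?_)
  refine ((hasDerivAt_iff_tendsto_slope.1 (hΦ h x).hasDerivAt).comp hseq).congr fun n => ?_
  simp [slope_def_field, div_inv_eq_mul]

theorem HasStrictDerivAt.hasDerivAt_of_comp_eq_of_injOn {𝕜 : Type*} [NontriviallyNormedField 𝕜]
    [CompleteSpace 𝕜] {F g ψ : 𝕜 → 𝕜} {S : Set 𝕜} {F' ψ' y : 𝕜}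
    (hF : HasStrictDerivAt F F' (g y)) (hF' : F' ≠ 0) (hψ : HasDerivAt ψ ψ' y)
    (hS : S ∈ 𝓝 (g y)) (hinj : InjOn F S) (hgS : ∀ᶠ z in 𝓝 y, g z ∈ S)
    (hFg : ∀ᶠ z in 𝓝 y, F (g z) = ψ z) :
    HasDerivAt g (ψ' / F') y := by
  -- Near `y`, `g` agrees with the local inverse of `F` composed with `ψ`, by injectivity on `S`.
  set φ := hF.localInverse F F' (g y) hF'
  have hψy : ψ y = F (g y) := hFg.self_of_nhds.symm
  have hψ_tendsto : Tendsto ψ (𝓝 y) (𝓝 (F (g y))) := hψy ▸ hψ.continuousAt.tendsto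
  have hφ_tendsto : Tendsto φ (𝓝 (F (g y))) (𝓝 (g y)) :=
    (hF.hasStrictFDerivAt_equiv hF').localInverse_tendsto
  have hφψ : HasDerivAt (φ ∘ ψ) (F'⁻¹ * ψ') y :=
    (hψy ▸ (hF.to_localInverse hF').hasDerivAt).comp y hψ
  have hg_eq : φ ∘ ψ =ᶠ[𝓝 y] g := by
    filter_upwards [hgS, hFg, hψ_tendsto.eventually (hF.eventually_right_inverse hF'),
      hψ_tendsto.eventually (hφ_tendsto.eventually hS)] with z hgz hFgz hright hφS
    exact hinj hφS hgz (hright.trans hFgz.symm)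
  simpa [div_eq_inv_mul] using hφψ.congr_of_eventuallyEq hg_eq.symm

theorem hasDerivAt_of_comp_eq_one_sub {S U : Set ℝ} {F cv : ℝ → ℝ} (hS_open : IsOpen S)
    (hS_conn : S.OrdConnected) (hF : ContDiff ℝ 1 F) (hf_pos : ∀ x ∈ S, 0 < deriv F x)
    (hU : IsOpen U) (hcv_mem : ∀ p ∈ U, cv p ∈ S) (hcv_eq : ∀ p ∈ U, F (cv p) = 1 - p)
    {p : ℝ} (hp : p ∈ U) :
    HasDerivAt cv (-(deriv F (cv p))⁻¹) p := by
  have hinj : InjOn F S := (strictMonoOn_of_deriv_pos (convex_iff_ordConnected.2 hS_conn)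
    hF.continuous.continuousOn (by rwa [hS_open.interior_eq])).injOn
  simpa [neg_div] using HasStrictDerivAt.hasDerivAt_of_comp_eq_of_injOn
    (hF.contDiffAt.hasStrictDerivAt one_ne_zero) (hf_pos _ (hcv_mem p hp)).ne'
    ((hasDerivAt_id p).const_sub 1) (hS_open.mem_nhds (hcv_mem p hp)) hinj
    (eventually_of_mem (hU.mem_nhds hp) hcv_mem) (eventually_of_mem (hU.mem_nhds hp) hcv_eq)

section ParametricIntegral

variable {H : Type*} [MeasurableSpace H] {μ : Measure H} [IsFiniteMeasure μ]
  {Φ Φ' : H → ℝ → ℝ} {u u' : ℝ → ℝ} {p₀ C : ℝ}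

theorem hasDerivAt_integral_comp (hΦ : ∀ h x, HasDerivAt (Φ h) (Φ' h x) x)
    (hΦ_meas : ∀ x, Measurable fun h => Φ h x) (hΦ'_meas : ∀ x, Measurable fun h => Φ' h x)
    (hΦ'_le : ∀ h x, |Φ' h x| ≤ C) (hΦ_int : Integrable (fun h => Φ h (u p₀)) μ)
    (hu : ∀ᶠ p in 𝓝 p₀, HasDerivAt u (u' p) p) (hu' : ContinuousAt u' p₀) :
    HasDerivAt (fun p => ∫ h, Φ h (u p) ∂μ) ((∫ h, Φ' h (u p₀) ∂μ) * u' p₀) p₀ := by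
  have hu'_le : ∀ᶠ p in 𝓝 p₀, |u' p| ≤ |u' p₀| + 1 := by
    filter_upwards [hu'.eventually (Metric.closedBall_mem_nhds (u' p₀) one_pos)] with p hp
    have := abs_sub_abs_le_abs_sub (u' p) (u' p₀)
    rw [Real.dist_eq] at hp
    linarith
  have key := hasDerivAt_integral_of_dominated_loc_of_deriv_le (μ := μ)
    (F := fun p h => Φ h (u p)) (F' := fun p h => Φ' h (u p) * u' p)
    (bound := fun _ => C * (|u' p₀| + 1)) (hu.and hu'_le)
    (Eventually.of_forall fun p => (hΦ_meas (u p)).aestronglyMeasurable) hΦ_int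
    ((hΦ'_meas (u p₀)).mul_const _).aestronglyMeasurable
    (ae_of_all _ fun h p hp => by
      rw [Real.norm_eq_abs, abs_mul]
      exact mul_le_mul (hΦ'_le h _) hp.2 (abs_nonneg _) ((abs_nonneg _).trans (hΦ'_le h 0)))
    (integrable_const _)
    (ae_of_all _ fun h p hp => (hΦ h (u p)).comp p hp.1)
  simpa only [integral_mul_const] using key.2

theorem continuousAt_integral_comp (hΦ : ∀ h, Continuous (Φ h))
    (hΦ_meas : ∀ x, Measurable fun h => Φ h x) (hΦ_le : ∀ h x, |Φ h x| ≤ C)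
    (hu : ContinuousAt u p₀) :
    ContinuousAt (fun p => ∫ h, Φ h (u p) ∂μ) p₀ :=
  continuousAt_of_dominated (bound := fun _ => C)
    (Eventually.of_forall fun p => (hΦ_meas (u p)).aestronglyMeasurable)
    (Eventually.of_forall fun p => ae_of_all _ fun h => hΦ_le h (u p))
    (integrable_const _) (ae_of_all _ fun h => (hΦ h).continuousAt.comp hu)

end ParametricIntegral

theorem abs_le_one_of_tendsto_atBot_atTop {F : ℝ → ℝ} (hmono : Monotone F)
    (hbot : Tendsto F atBot (𝓝 0)) (htop : Tendsto F atTop (𝓝 1)) (x : ℝ) : |F x| ≤ 1 :=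
  abs_le.2 ⟨by linarith [hmono.le_of_tendsto hbot x], hmono.ge_of_tendsto htop x⟩

section CDFFamily

variable {H : Type*} [MeasurableSpace H] {μ : Measure H} [IsFiniteMeasure μ]
  {Fh : H → ℝ → ℝ} {u u' : ℝ → ℝ} {p₀ C : ℝ}

theorem measurable_deriv_deriv_apply (hFh_smooth : ∀ h, ContDiff ℝ 2 (Fh h))
    (hFh_meas : ∀ x, Measurable fun h => Fh h x) (x : ℝ) :
    Measurable fun h => deriv (deriv (Fh h)) x :=
  measurable_deriv_apply (fun h => ((hFh_smooth h).deriv' (n := 1)).differentiable one_ne_zero)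
    (measurable_deriv_apply (fun h => (hFh_smooth h).differentiable two_ne_zero) hFh_meas) x

theorem hasDerivAt_integral_one_sub_comp (hFh_smooth : ∀ h, ContDiff ℝ 2 (Fh h))
    (hFh_mono : ∀ h, Monotone (Fh h)) (hFh_bot : ∀ h, Tendsto (Fh h) atBot (𝓝 0))
    (hFh_top : ∀ h, Tendsto (Fh h) atTop (𝓝 1)) (hFh_meas : ∀ x, Measurable fun h => Fh h x)
    (hbound : ∀ h x, |deriv (Fh h) x| ≤ C)
    (hu : ∀ᶠ p in 𝓝 p₀, HasDerivAt u (u' p) p) (hu' : ContinuousAt u' p₀) :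
    HasDerivAt (fun p => ∫ h, (1 - Fh h (u p)) ∂μ)
      ((∫ h, deriv (Fh h) (u p₀) ∂μ) * -u' p₀) p₀ := by
  have hFh_int : Integrable (fun h => Fh h (u p₀)) μ := Integrable.of_bound
    (hFh_meas _).aestronglyMeasurable 1 (ae_of_all _ fun h =>
      abs_le_one_of_tendsto_atBot_atTop (hFh_mono h) (hFh_bot h) (hFh_top h) _)
  have key := hasDerivAt_integral_comp (μ := μ) (Φ' := fun h x => -deriv (Fh h) x)
    (fun h x => (((hFh_smooth h).differentiable two_ne_zero x).hasDerivAt).const_sub 1)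
    (fun x => measurable_const.sub (hFh_meas x))
    (fun x => (measurable_deriv_apply (fun h => (hFh_smooth h).differentiable two_ne_zero)
      hFh_meas x).neg)
    (fun h x => (abs_neg (deriv (Fh h) x)).trans_le (hbound h x))
    ((integrable_const 1).sub hFh_int) hu hu'
  simpa only [integral_neg, neg_mul, mul_neg] using key

theorem hasDerivAt_integral_deriv_comp (hFh_smooth : ∀ h, ContDiff ℝ 2 (Fh h))
    (hFh_meas : ∀ x, Measurable fun h => Fh h x)
    (hfh_le : ∀ h x, |deriv (Fh h) x| ≤ C) (hfh'_le : ∀ h x, |deriv (deriv (Fh h)) x| ≤ C)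
    (hu : ∀ᶠ p in 𝓝 p₀, HasDerivAt u (u' p) p) (hu' : ContinuousAt u' p₀) :
    HasDerivAt (fun p => ∫ h, deriv (Fh h) (u p) ∂μ)
      ((∫ h, deriv (deriv (Fh h)) (u p₀) ∂μ) * u' p₀) p₀ := by
  have hfh : ∀ h, Differentiable ℝ (deriv (Fh h)) := fun h =>
    ((hFh_smooth h).deriv' (n := 1)).differentiable one_ne_zero
  have hfh_meas := measurable_deriv_apply
    (fun h => (hFh_smooth h).differentiable two_ne_zero) hFh_meas
  exact hasDerivAt_integral_comp (fun h x => (hfh h x).hasDerivAt) hfh_meas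
    (measurable_deriv_deriv_apply hFh_smooth hFh_meas) hfh'_le
    (Integrable.of_bound (hfh_meas _).aestronglyMeasurable C
      (ae_of_all _ fun h => hfh_le h _)) hu hu'

theorem continuousAt_integral_deriv_deriv_comp (hFh_smooth : ∀ h, ContDiff ℝ 2 (Fh h))
    (hFh_meas : ∀ x, Measurable fun h => Fh h x) (hfh'_le : ∀ h x, |deriv (deriv (Fh h)) x| ≤ C)
    (hu : ContinuousAt u p₀) :
    ContinuousAt (fun p => ∫ h, deriv (deriv (Fh h)) (u p) ∂μ) p₀ :=
  continuousAt_integral_comp (fun h => ((hFh_smooth h).deriv' (n := 1)).continuous_deriv_one)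
    (measurable_deriv_deriv_apply hFh_smooth hFh_meas) hfh'_le hu

theorem mul_integral_deriv_le_integral_deriv_deriv_mul (hFh_smooth : ∀ h, ContDiff ℝ 2 (Fh h))
    (hFh_meas : ∀ x, Measurable fun h => Fh h x) (hfh_le : ∀ h x, |deriv (Fh h) x| ≤ C)
    (hfh'_le : ∀ h x, |deriv (deriv (Fh h)) x| ≤ C) {a b x : ℝ}
    (hMLR : ∀ h, deriv (deriv (Fh h)) x * a ≥ b * deriv (Fh h) x) :
    b * ∫ h, deriv (Fh h) x ∂μ ≤ (∫ h, deriv (deriv (Fh h)) x ∂μ) * a := by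
  rw [← integral_const_mul, ← integral_mul_const]
  refine integral_mono ?_ ?_ hMLR
  · exact (Integrable.of_bound (measurable_deriv_apply
      (fun h => (hFh_smooth h).differentiable two_ne_zero) hFh_meas x).aestronglyMeasurable C
      (ae_of_all _ fun h => hfh_le h x)).const_mul b
  · exact (Integrable.of_bound
      (measurable_deriv_deriv_apply hFh_smooth hFh_meas x).aestronglyMeasurable C
      (ae_of_all _ fun h => hfh'_le h x)).mul_const a

end CDFFamily

theorem HasDerivAt.mul_inv_comp {J K f f' u : ℝ → ℝ} {p : ℝ}
    (hJ : HasDerivAt J (K p * -(f (u p))⁻¹) p) (hf : HasDerivAt f (f' (u p)) (u p))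
    (hu : HasDerivAt u (-(f (u p))⁻¹) p) (hfu : f (u p) ≠ 0) :
    HasDerivAt (fun q => J q * (f (u q))⁻¹)
      ((f' (u p) * J p - K p * f (u p)) / f (u p) ^ 3) p := by
  refine (hJ.mul ((hf.comp p hu).inv hfu)).congr_deriv ?_
  simp only [Pi.inv_apply, Function.comp_apply]
  field_simp
  ring

theorem concaveOn_and_contDiffOn_deriv {U : Set ℝ} (hU : IsOpen U) (hUc : Convex ℝ U)
    {G G' G'' : ℝ → ℝ} (hG : ∀ p ∈ U, HasDerivAt G (G' p) p)
    (hG' : ∀ p ∈ U, HasDerivAt G' (G'' p) p) (hG''_cont : ContinuousOn G'' U)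
    (hG''_nonpos : ∀ p ∈ U, G'' p ≤ 0) :
    ConcaveOn ℝ U G ∧ ContDiffOn ℝ 1 (deriv G) U ∧ ∀ p ∈ U, deriv (deriv G) p ≤ 0 := by
  have hderiv : EqOn (deriv G) G' U := fun p hp => (hG p hp).deriv
  have hderiv2 : EqOn (deriv (deriv G)) G'' U := fun p hp =>
    ((hG' p hp).congr_of_eventuallyEq (hderiv.eventuallyEq_of_mem (hU.mem_nhds hp))).deriv
  refine ⟨concaveOn_of_hasDerivWithinAt2_nonpos (f' := G') hUc
    (fun p hp => (hG p hp).continuousAt.continuousWithinAt) (fun p hp => ?_) (fun p hp => ?_)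
    (fun p hp => hG''_nonpos p (interior_subset hp)), ?_,
    fun p hp => hderiv2 hp ▸ hG''_nonpos p hp⟩
  · exact (hG p (interior_subset hp)).hasDerivWithinAt
  · exact (hG' p (interior_subset hp)).hasDerivWithinAt
  · rw [show (1 : WithTop ℕ∞) = 0 + 1 from rfl, contDiffOn_succ_iff_deriv_of_isOpen hU,
      contDiffOn_zero]
    refine ⟨fun p hp => ?_, by simp, hG''_cont.congr hderiv2⟩
    exact ((hG' p hp).differentiableAt.congr_of_eventuallyEq
      (hderiv.eventuallyEq_of_mem (hU.mem_nhds hp))).differentiableWithinAt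

theorem stmt_1_general
    {H : Type*} [MeasurableSpace H]
    (S : Set ℝ) (hS_open : IsOpen S) (hS_conn : S.OrdConnected)
    (F : ℝ → ℝ)
    (hF_smooth : ContDiff ℝ 2 F)
    (hf_pos : ∀ x ∈ S, 0 < deriv F x)
    (Fh : H → ℝ → ℝ)
    (hFh_smooth : ∀ h, ContDiff ℝ 2 (Fh h))
    (hFh_mono : ∀ h, Monotone (Fh h))
    (hFh_bot : ∀ h, Tendsto (Fh h) atBot (𝓝 0))
    (hFh_top : ∀ h, Tendsto (Fh h) atTop (𝓝 1))
    (hFh_meas : ∀ x : ℝ, Measurable fun h => Fh h x)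
    (C : ℝ)
    (hbound : ∀ (h : H) (x : ℝ),
      |deriv (Fh h) x| ≤ C ∧ |deriv (deriv (Fh h)) x| ≤ C)
    (hMLR : ∀ (h : H), ∀ x ∈ S,
      deriv (deriv (Fh h)) x * deriv F x ≥ deriv (deriv F) x * deriv (Fh h) x)
    (Pi : Measure H) [IsProbabilityMeasure Pi]
    (cv : ℝ → ℝ)
    (hcv_mem : ∀ p ∈ Ioo (0 : ℝ) 1, cv p ∈ S)
    (hcv_eq : ∀ p ∈ Ioo (0 : ℝ) 1, F (cv p) = 1 - p)
    (G : ℝ → ℝ) (hG : ∀ p : ℝ, G p = ∫ h, (1 - Fh h (cv p)) ∂Pi) :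
    ConcaveOn ℝ (Ioo 0 1) G ∧
    ContDiffOn ℝ 1 (deriv G) (Ioo 0 1) ∧
    (∀ p ∈ Ioo (0 : ℝ) 1, deriv (deriv G) p ≤ 0) := by
  set f := deriv F
  set J := fun p => ∫ h, deriv (Fh h) (cv p) ∂Pi
  set K := fun p => ∫ h, deriv (deriv (Fh h)) (cv p) ∂Pi
  set g' := fun p => (deriv f (cv p) * J p - K p * f (cv p)) / f (cv p) ^ 3
  have hfh_le : ∀ h x, |deriv (Fh h) x| ≤ C := fun h x => (hbound h x).1
  have hfh'_le : ∀ h x, |deriv (deriv (Fh h)) x| ≤ C := fun h x => (hbound h x).2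
  have hf : ContDiff ℝ 1 f := hF_smooth.deriv' (n := 1)
  have hcv : ∀ p ∈ Ioo (0 : ℝ) 1, HasDerivAt cv (-(f (cv p))⁻¹) p := fun p hp =>
    hasDerivAt_of_comp_eq_one_sub hS_open hS_conn (hF_smooth.of_le one_le_two) hf_pos isOpen_Ioo
      hcv_mem hcv_eq hp
  have hcv_near : ∀ p ∈ Ioo (0 : ℝ) 1, ∀ᶠ q in 𝓝 p, HasDerivAt cv (-(f (cv q))⁻¹) q :=
    fun p hp => eventually_of_mem (isOpen_Ioo.mem_nhds hp) hcv
  have hfcv_cont : ∀ p ∈ Ioo (0 : ℝ) 1, ContinuousAt (fun q => f (cv q)) p := fun p hp =>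
    hf.continuous.continuousAt.comp (hcv p hp).continuousAt
  have hcv'_cont : ∀ p ∈ Ioo (0 : ℝ) 1, ContinuousAt (fun q => -(f (cv q))⁻¹) p := fun p hp =>
    ((hfcv_cont p hp).inv₀ (hf_pos _ (hcv_mem p hp)).ne').neg
  have hG' : ∀ p ∈ Ioo (0 : ℝ) 1, HasDerivAt G (J p * (f (cv p))⁻¹) p := fun p hp => by
    rw [funext hG, ← neg_neg (f (cv p))⁻¹]
    exact hasDerivAt_integral_one_sub_comp hFh_smooth hFh_mono hFh_bot hFh_top hFh_meas hfh_le
      (hcv_near p hp) (hcv'_cont p hp)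
  have hJ' : ∀ p ∈ Ioo (0 : ℝ) 1, HasDerivAt J (K p * -(f (cv p))⁻¹) p := fun p hp =>
    hasDerivAt_integral_deriv_comp hFh_smooth hFh_meas hfh_le hfh'_le (hcv_near p hp)
      (hcv'_cont p hp)
  have hG'' : ∀ p ∈ Ioo (0 : ℝ) 1, HasDerivAt (fun q => J q * (f (cv q))⁻¹) (g' p) p :=
    fun p hp => (hJ' p hp).mul_inv_comp (hf.differentiable one_ne_zero _).hasDerivAt (hcv p hp)
      (hf_pos _ (hcv_mem p hp)).ne'
  have hg'_cont : ContinuousOn g' (Ioo 0 1) := fun p hp => by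
    have hf'cv : ContinuousAt (fun q => deriv f (cv q)) p :=
      hf.continuous_deriv_one.continuousAt.comp (hcv p hp).continuousAt
    have hK : ContinuousAt K p := continuousAt_integral_deriv_deriv_comp (μ := Pi) hFh_smooth
      hFh_meas hfh'_le (hcv p hp).continuousAt
    exact (((hf'cv.mul (hJ' p hp).continuousAt).sub (hK.mul (hfcv_cont p hp))).div
      ((hfcv_cont p hp).pow 3) (pow_ne_zero 3 (hf_pos _ (hcv_mem p hp)).ne')).continuousWithinAt
  have hg'_nonpos : ∀ p ∈ Ioo (0 : ℝ) 1, g' p ≤ 0 := fun p hp =>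
    div_nonpos_of_nonpos_of_nonneg (sub_nonpos.2 (mul_integral_deriv_le_integral_deriv_deriv_mul
      hFh_smooth hFh_meas hfh_le hfh'_le fun h => hMLR h _ (hcv_mem p hp)))
      (pow_nonneg (hf_pos _ (hcv_mem p hp)).le 3)
  exact concaveOn_and_contDiffOn_deriv isOpen_Ioo (convex_Ioo 0 1) hG' hG'' hg'_cont hg'_nonpos

/-- Let S be an open interval, F a twice continuously differentiable CDF with
density f = F′ positive on S and F(S) = (0,1). Let {F_h}_{h ∈ H} be a measurable family of
twice continuously differentiable CDFs whose densities f_h and their derivatives f_h′ are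
uniformly bounded over h, and suppose f_h′(x)·f(x) ≥ f′(x)·f_h(x) for all x ∈ S, h ∈ H.
For a probability measure Π on H, the CDF of p-values
G(p) = ∫ (1 − F_h(F⁻¹(1−p))) dΠ(h) is concave on (0,1); equivalently its derivative g
(the p-curve) is continuously differentiable with g′(p) ≤ 0 on (0,1). -/
theorem stmt_1
    {H : Type*} [MeasurableSpace H]
    (S : Set ℝ) (hS_open : IsOpen S) (hS_conn : S.OrdConnected)
    (F : ℝ → ℝ)
    (hF_smooth : ContDiff ℝ 2 F)
    (hF_mono : Monotone F)
    (hF_bot : Tendsto F atBot (𝓝 0)) (hF_top : Tendsto F atTop (𝓝 1))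
    (hf_pos : ∀ x ∈ S, 0 < deriv F x)
    (hFS : F '' S = Ioo 0 1)
    (Fh : H → ℝ → ℝ)
    (hFh_smooth : ∀ h, ContDiff ℝ 2 (Fh h))
    (hFh_mono : ∀ h, Monotone (Fh h))
    (hFh_bot : ∀ h, Tendsto (Fh h) atBot (𝓝 0))
    (hFh_top : ∀ h, Tendsto (Fh h) atTop (𝓝 1))
    (hFh_meas : ∀ x : ℝ, Measurable fun h => Fh h x)
    (C : ℝ)
    (hbound : ∀ (h : H) (x : ℝ),
      |deriv (Fh h) x| ≤ C ∧ |deriv (deriv (Fh h)) x| ≤ C)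
    (hMLR : ∀ (h : H), ∀ x ∈ S,
      deriv (deriv (Fh h)) x * deriv F x ≥ deriv (deriv F) x * deriv (Fh h) x)
    (Pi : Measure H) [IsProbabilityMeasure Pi]
    (cv : ℝ → ℝ)
    (hcv_mem : ∀ p ∈ Ioo (0 : ℝ) 1, cv p ∈ S)
    (hcv_eq : ∀ p ∈ Ioo (0 : ℝ) 1, F (cv p) = 1 - p)
    (G : ℝ → ℝ) (hG : ∀ p : ℝ, G p = ∫ h, (1 - Fh h (cv p)) ∂Pi) :
    ConcaveOn ℝ (Ioo 0 1) G ∧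
    ContDiffOn ℝ 1 (deriv G) (Ioo 0 1) ∧
    (∀ p ∈ Ioo (0 : ℝ) 1, deriv (deriv G) p ≤ 0) :=
  stmt_1_general S hS_open hS_conn F hF_smooth hf_pos Fh hFh_smooth hFh_mono hFh_bot hFh_top
    hFh_meas C hbound hMLR Pi cv hcv_mem hcv_eq G hG
end

section
/- Let φ be the standard normal density, let f(x) = 2φ(x) be the half-normal density, and let f_h(x) = φ(x−h) + φ(x+h) be the folded normal density with location parameter h. Then for all x > 0 and all h ∈ ℝ, f_h′(x)·f(x) − f′(x)·f_h(x) = 2φ(x)·φ(x+h)·h·(e^{2xh} − 1) ≥ 0. -/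
/-!
Since φ′(y) = −y φ(y), the expression equals 2h φ(x) (φ(x − h) − φ(x + h)), and completing the
square gives φ(x − h) = φ(x + h) e^{2xh}. For x > 0 the factors h and e^{2xh} − 1 have the same sign.
-/

/-- The standard normal density φ(x) = (2π)^{-1/2} exp(-x²/2). -/
noncomputable def stdNormalPdf (x : ℝ) : ℝ :=
  (Real.sqrt (2 * Real.pi))⁻¹ * Real.exp (-x ^ 2 / 2)

open Real

lemma hasDerivAt_stdNormalPdf (x : ℝ) :
    HasDerivAt stdNormalPdf (-x * stdNormalPdf x) x := by
  have hquad : HasDerivAt (fun y : ℝ => -y ^ 2 / 2) (-x) x :=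
    ((hasDerivAt_pow 2 x).neg.div_const 2).congr_deriv (by ring)
  exact (hquad.exp.const_mul (√(2 * π))⁻¹).congr_deriv (by unfold stdNormalPdf; ring)

lemma stdNormalPdf_nonneg (x : ℝ) : 0 ≤ stdNormalPdf x := by
  unfold stdNormalPdf
  positivity

lemma stdNormalPdf_sub_eq_mul_exp (x h : ℝ) :
    stdNormalPdf (x - h) = stdNormalPdf (x + h) * exp (2 * x * h) := by
  unfold stdNormalPdf
  rw [mul_assoc, ← exp_add]
  ring_nf

lemma mul_exp_mul_sub_one_nonneg {a : ℝ} (ha : 0 ≤ a) (h : ℝ) : 0 ≤ h * (exp (a * h) - 1) := by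
  rcases le_total 0 h with hh | hh
  · exact mul_nonneg hh (sub_nonneg.2 (one_le_exp (mul_nonneg ha hh)))
  · exact mul_nonneg_of_nonpos_of_nonpos hh
      (sub_nonpos.2 (exp_le_one_iff.2 (mul_nonpos_of_nonneg_of_nonpos ha hh)))

/-- with the half-normal density f(x) = 2φ(x) and the folded normal density
f_h(x) = φ(x−h) + φ(x+h), for all x > 0 and all h ∈ ℝ,
f_h′(x)·f(x) − f′(x)·f_h(x) = 2φ(x)·φ(x+h)·h·(e^{2xh} − 1) ≥ 0. -/
theorem stmt_3 (h : ℝ) (x : ℝ) (hx : 0 < x) :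
    deriv (fun y => stdNormalPdf (y - h) + stdNormalPdf (y + h)) x * (2 * stdNormalPdf x) -
        deriv (fun y => 2 * stdNormalPdf y) x * (stdNormalPdf (x - h) + stdNormalPdf (x + h)) =
      2 * stdNormalPdf x * stdNormalPdf (x + h) * h * (Real.exp (2 * x * h) - 1) ∧
    0 ≤ 2 * stdNormalPdf x * stdNormalPdf (x + h) * h * (Real.exp (2 * x * h) - 1) := by
  have hfolded : HasDerivAt (fun y => stdNormalPdf (y - h) + stdNormalPdf (y + h))
      (-(x - h) * stdNormalPdf (x - h) + -(x + h) * stdNormalPdf (x + h)) x :=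
    ((hasDerivAt_stdNormalPdf (x - h)).comp_sub_const x h).add
      ((hasDerivAt_stdNormalPdf (x + h)).comp_add_const x h)
  rw [hfolded.deriv, ((hasDerivAt_stdNormalPdf x).const_mul 2).deriv,
    stdNormalPdf_sub_eq_mul_exp]
  refine ⟨by ring, ?_⟩
  rw [mul_assoc]
  exact mul_nonneg
    (mul_nonneg (mul_nonneg zero_le_two (stdNormalPdf_nonneg x)) (stdNormalPdf_nonneg (x + h)))
    (mul_exp_mul_sub_one_nonneg (by positivity) h)
end

section
/- Let Π be a probability measure on [0,∞) and let g₁(p) = ∫_{[0,∞)} exp(h·cv₁(p) − h²/2) dΠ(h). Then g₁ is completely monotone on (0, 1/2]: for every integer k ≥ 0 and every p ∈ (0, 1/2], 0 ≤ (−1)^k g₁^{(k)}(p). -/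
/-!
Write `c = cv p`, so that `dc/dp = -1/φ(c) = -√(2π) exp (c²/2)`. Differentiating in `p` shows by
induction that `(-d/dp)^k exp (h c - h²/2) = √(2π)^k Q_k(c, h) exp (k c²/2 + h c - h²/2)` for a
polynomial `Q_k` with nonnegative coefficients. For `p ≤ 1/2` we have `c ≥ 0`, and `Π` lives on
`h ≥ 0`, so the integrand of `(-1)^k g₁^{(k)}(p)` is nonnegative. Differentiating under the integral
is legitimate because `Q_k(c, h) exp (h c - h²/2)` is bounded on `h ≥ 0`, locally uniformly in `c`.
-/

open MeasureTheory

/-- The standard normal CDF Φ(x) = ∫_{-∞}^x φ(t) dt. -/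
noncomputable def stdNormalCdf (x : ℝ) : ℝ :=
  ∫ t in Set.Iic x, stdNormalPdf t

open Polynomial NNReal Real ProbabilityTheory
open scoped Nat

namespace Polynomial

variable {R S : Type*} [Semiring R] [CommRing S] [LinearOrder S] [IsStrictOrderedRing S]
  {f : R →+* S}

theorem eval₂_nonneg (hf : ∀ a, 0 ≤ f a) {x : S} (hx : 0 ≤ x) (p : R[X]) :
    0 ≤ p.eval₂ f x := by
  rw [eval₂_eq_sum_range]
  exact Finset.sum_nonneg fun i _ => mul_nonneg (hf _) (pow_nonneg hx i)

theorem abs_eval₂_le_of_abs_le (hf : ∀ a, 0 ≤ f a) {x y : S} (hxy : |x| ≤ y) (p : R[X]) :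
    |p.eval₂ f x| ≤ p.eval₂ f y := by
  rw [eval₂_eq_sum_range, eval₂_eq_sum_range]
  refine (Finset.abs_sum_le_sum_abs _ _).trans (Finset.sum_le_sum fun i _ => ?_)
  rw [abs_mul, abs_of_nonneg (hf _), abs_pow]
  exact mul_le_mul_of_nonneg_left (pow_le_pow_left₀ (abs_nonneg x) hxy i) (hf _)

end Polynomial

theorem pow_mul_exp_sub_sq_le {h : ℝ} (hh : 0 ≤ h) (i : ℕ) (A : ℝ) :
    h ^ i * exp (h * A - h ^ 2 / 2) ≤ i ! * exp ((A + 1) ^ 2 / 2) := by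
  have hpow : h ^ i ≤ i ! * exp h := by
    have := pow_div_factorial_le_exp h hh i
    rwa [div_le_iff₀' (by positivity)] at this
  calc h ^ i * exp (h * A - h ^ 2 / 2)
      ≤ i ! * exp h * exp (h * A - h ^ 2 / 2) := by gcongr
    _ = i ! * exp (h * (A + 1) - h ^ 2 / 2) := by rw [mul_assoc, ← exp_add]; ring_nf
    _ ≤ i ! * exp ((A + 1) ^ 2 / 2) := by
      gcongr; nlinarith [sq_nonneg (h - (A + 1))]

theorem Polynomial.exists_abs_eval_mul_exp_le (P : ℝ[X]) (A : ℝ) :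
    ∃ M, ∀ h, 0 ≤ h → |P.eval h| * exp (h * A - h ^ 2 / 2) ≤ M := by
  refine ⟨∑ i ∈ Finset.range (P.natDegree + 1), |P.coeff i| * (i ! * exp ((A + 1) ^ 2 / 2)),
    fun h hh => ?_⟩
  rw [eval_eq_sum_range]
  refine (mul_le_mul_of_nonneg_right (Finset.abs_sum_le_sum_abs _ _) (exp_nonneg _)).trans ?_
  rw [Finset.sum_mul]
  refine Finset.sum_le_sum fun i _ => ?_
  rw [abs_mul, abs_pow, abs_of_nonneg hh, mul_assoc]
  exact mul_le_mul_of_nonneg_left (pow_mul_exp_sub_sq_le hh i A) (abs_nonneg _)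

theorem stdNormalPdf_eq_gaussianPDFReal : stdNormalPdf = gaussianPDFReal 0 1 := by
  funext x; simp [stdNormalPdf, gaussianPDFReal]

theorem stdNormalPdf_pos (x : ℝ) : 0 < stdNormalPdf x := by
  rw [stdNormalPdf_eq_gaussianPDFReal]; exact gaussianPDFReal_pos 0 1 x one_ne_zero

theorem continuous_stdNormalPdf : Continuous stdNormalPdf := by
  unfold stdNormalPdf; fun_prop

theorem integrable_stdNormalPdf : Integrable stdNormalPdf := by
  rw [stdNormalPdf_eq_gaussianPDFReal]; exact integrable_gaussianPDFReal 0 1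

theorem hasDerivAt_stdNormalCdf (x : ℝ) : HasDerivAt stdNormalCdf (stdNormalPdf x) x := by
  have hsplit : ∀ y, stdNormalCdf y = stdNormalCdf 0 + ∫ t in (0 : ℝ)..y, stdNormalPdf t := by
    intro y
    rw [← intervalIntegral.integral_Iic_sub_Iic integrable_stdNormalPdf.integrableOn
      integrable_stdNormalPdf.integrableOn, stdNormalCdf, stdNormalCdf]
    ring
  refine HasDerivAt.congr_of_eventuallyEq ?_ (Filter.Eventually.of_forall hsplit)
  exact (intervalIntegral.integral_hasDerivAt_right integrable_stdNormalPdf.intervalIntegrable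
    continuous_stdNormalPdf.aestronglyMeasurable.stronglyMeasurableAtFilter
    continuous_stdNormalPdf.continuousAt).const_add _

theorem hasStrictDerivAt_stdNormalCdf (x : ℝ) :
    HasStrictDerivAt stdNormalCdf (stdNormalPdf x) x :=
  hasStrictDerivAt_of_hasDerivAt_of_continuousAt
    (Filter.Eventually.of_forall hasDerivAt_stdNormalCdf) continuous_stdNormalPdf.continuousAt

theorem strictMono_stdNormalCdf : StrictMono stdNormalCdf :=
  strictMono_of_deriv_pos fun x => (hasDerivAt_stdNormalCdf x).deriv ▸ stdNormalPdf_pos x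

theorem stdNormalCdf_zero : stdNormalCdf 0 = 1 / 2 := by
  have hsymm : ∫ t in Set.Ioi 0, stdNormalPdf t = stdNormalCdf 0 := by
    rw [← neg_zero, ← integral_comp_neg_Iic, stdNormalCdf]
    simp [stdNormalPdf]
  have htotal : stdNormalCdf 0 + ∫ t in Set.Ioi 0, stdNormalPdf t = 1 := by
    rw [stdNormalCdf, ← Set.compl_Iic, integral_add_compl measurableSet_Iic integrable_stdNormalPdf,
      stdNormalPdf_eq_gaussianPDFReal, integral_gaussianPDFReal_eq_one 0 one_ne_zero]
  linarith

theorem nonneg_of_half_le_stdNormalCdf {x : ℝ} (hx : 1 / 2 ≤ stdNormalCdf x) : 0 ≤ x :=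
  strictMono_stdNormalCdf.le_iff_le.mp (stdNormalCdf_zero ▸ hx)

theorem hasDerivAt_of_stdNormalCdf_eq_one_sub {cv : ℝ → ℝ}
    (hcv : ∀ p ∈ Set.Ioo (0 : ℝ) 1, stdNormalCdf (cv p) = 1 - p) {p : ℝ}
    (hp : p ∈ Set.Ioo (0 : ℝ) 1) : HasDerivAt cv (-(stdNormalPdf (cv p))⁻¹) p := by
  -- Near `p`, `cv` is the local inverse of `stdNormalCdf` evaluated at `1 - x`, by injectivity.
  have hΦ := hasStrictDerivAt_stdNormalCdf (cv p)
  have hφ := (stdNormalPdf_pos (cv p)).ne'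
  set L := hΦ.localInverse stdNormalCdf _ _ hφ
  have hL : HasDerivAt (fun x => L (1 - x)) (-(stdNormalPdf (cv p))⁻¹) p := by
    have := (hΦ.to_localInverse hφ).hasDerivAt
    rw [hcv p hp] at this
    exact (this.comp p ((hasDerivAt_id' p).const_sub 1)).congr_deriv (mul_neg_one _)
  refine hL.congr_of_eventuallyEq ?_
  have hinv : ∀ᶠ x in nhds p, stdNormalCdf (L (1 - x)) = 1 - x := by
    have := hΦ.eventually_right_inverse hφ
    rw [hcv p hp] at this
    exact ((continuous_const.sub continuous_id).tendsto p).eventually this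
  filter_upwards [hinv, isOpen_Ioo.mem_nhds hp] with x hx hx01
  exact strictMono_stdNormalCdf.injective (by rw [hcv x hx01, hx])

noncomputable def evalReal₂ (q : ℝ≥0[X][X]) (c h : ℝ) : ℝ :=
  q.eval₂ (eval₂RingHom toRealHom h) c

theorem evalReal₂_nonneg (q : ℝ≥0[X][X]) {c h : ℝ} (hc : 0 ≤ c) (hh : 0 ≤ h) :
    0 ≤ evalReal₂ q c h :=
  eval₂_nonneg (eval₂_nonneg (fun a => a.2) hh) hc q

theorem abs_evalReal₂_le (q : ℝ≥0[X][X]) {c C h : ℝ} (hc : |c| ≤ C) (hh : 0 ≤ h) :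
    |evalReal₂ q c h| ≤ evalReal₂ q C h :=
  abs_eval₂_le_of_abs_le (eval₂_nonneg (fun a => a.2) hh) hc q

theorem evalReal₂_eq_eval (q : ℝ≥0[X][X]) (c h : ℝ) :
    evalReal₂ q c h = ((q.map (mapRingHom toRealHom)).eval (C c)).eval h := by
  rw [← coe_evalRingHom, eval, hom_eval₂, eval₂_map, RingHom.comp_id, coe_evalRingHom, eval_C,
    evalReal₂]
  congr
  exact RingHom.ext fun a => (eval_map _ _).symm

theorem hasDerivAt_evalReal₂ (q : ℝ≥0[X][X]) (c h : ℝ) :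
    HasDerivAt (fun c => evalReal₂ q c h) (evalReal₂ (derivative q) c h) c := by
  simp only [evalReal₂, ← eval_map, ← derivative_map]
  exact Polynomial.hasDerivAt _ c

/-- The recursion is `∂_c (Q e^{k c²/2 + h c - h²/2}) · e^{c²/2}
= (∂_c Q + (k c + h) Q) e^{(k+1) c²/2 + h c - h²/2}`. -/
noncomputable def likelihoodPoly : ℕ → ℝ≥0[X][X]
  | 0 => 1
  | k + 1 => derivative (likelihoodPoly k) + (C (C (k : ℝ≥0)) * X + C X) * likelihoodPoly k

noncomputable def likelihoodDeriv (k : ℕ) (c h : ℝ) : ℝ :=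
  √(2 * π) ^ k * (evalReal₂ (likelihoodPoly k) c h * exp (k * c ^ 2 / 2 + h * c - h ^ 2 / 2))

theorem likelihoodDeriv_zero (c h : ℝ) : likelihoodDeriv 0 c h = exp (h * c - h ^ 2 / 2) := by
  simp [likelihoodDeriv, likelihoodPoly, evalReal₂]

theorem evalReal₂_likelihoodPoly_succ (k : ℕ) (c h : ℝ) :
    evalReal₂ (likelihoodPoly (k + 1)) c h =
      evalReal₂ (derivative (likelihoodPoly k)) c h +
        (k * c + h) * evalReal₂ (likelihoodPoly k) c h := by
  simp [likelihoodPoly, evalReal₂]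

theorem hasDerivAt_likelihoodDeriv (k : ℕ) (c h : ℝ) :
    HasDerivAt (fun c => likelihoodDeriv k c h)
      (stdNormalPdf c * likelihoodDeriv (k + 1) c h) c := by
  have hexponent : HasDerivAt (fun c : ℝ => k * c ^ 2 / 2 + h * c - h ^ 2 / 2) (k * c + h) c :=
    (((((hasDerivAt_pow 2 c).const_mul (k : ℝ)).div_const 2).add
      ((hasDerivAt_id c).const_mul h)).sub_const (h ^ 2 / 2)).congr_deriv (by push_cast; ring)
  refine (((hasDerivAt_evalReal₂ (likelihoodPoly k) c h).mul hexponent.exp).const_mul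
    (√(2 * π) ^ k)).congr_deriv ?_
  have hexp : exp ((k + 1 : ℕ) * c ^ 2 / 2 + h * c - h ^ 2 / 2)
      = exp (c ^ 2 / 2) * exp (k * c ^ 2 / 2 + h * c - h ^ 2 / 2) := by
    rw [← exp_add]; push_cast; ring_nf
  have hs : √(2 * π) ≠ 0 := by positivity
  rw [stdNormalPdf, likelihoodDeriv, evalReal₂_likelihoodPoly_succ, hexp,
    pow_succ √(2 * π) k, neg_div, exp_neg]
  field_simp

theorem likelihoodDeriv_nonneg (k : ℕ) {c h : ℝ} (hc : 0 ≤ c) (hh : 0 ≤ h) :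
    0 ≤ likelihoodDeriv k c h := by
  have := evalReal₂_nonneg (likelihoodPoly k) hc hh
  unfold likelihoodDeriv; positivity

theorem continuous_likelihoodDeriv (k : ℕ) (c : ℝ) : Continuous (likelihoodDeriv k c) := by
  have : Continuous (evalReal₂ (likelihoodPoly k) c) := by
    simpa only [funext (evalReal₂_eq_eval _ c)] using Polynomial.continuous _
  unfold likelihoodDeriv; fun_prop

theorem exists_abs_likelihoodDeriv_le (k : ℕ) (C : ℝ) :
    ∃ M, ∀ c h, |c| ≤ C → 0 ≤ h → |likelihoodDeriv k c h| ≤ M := by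
  obtain ⟨M, hM⟩ := ((likelihoodPoly k).map (mapRingHom toRealHom) |>.eval (Polynomial.C C))
    |>.exists_abs_eval_mul_exp_le C
  refine ⟨√(2 * π) ^ k * exp (k * C ^ 2 / 2) * M, fun c h hc hh => ?_⟩
  have hexp : exp (k * c ^ 2 / 2 + h * c - h ^ 2 / 2)
      ≤ exp (k * C ^ 2 / 2) * exp (h * C - h ^ 2 / 2) := by
    rw [← exp_add, exp_le_exp]
    have hc2 : c ^ 2 ≤ C ^ 2 := sq_le_sq' (abs_le.mp hc).1 (abs_le.mp hc).2
    have hcC : h * c ≤ h * C := mul_le_mul_of_nonneg_left (abs_le.mp hc).2 hh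
    nlinarith [k.cast_nonneg (α := ℝ)]
  have hpoly : |evalReal₂ (likelihoodPoly k) c h| * exp (h * C - h ^ 2 / 2) ≤ M := by
    refine le_trans ?_ (hM h hh)
    rw [← evalReal₂_eq_eval]
    exact mul_le_mul_of_nonneg_right ((abs_evalReal₂_le _ hc hh).trans (le_abs_self _))
      (exp_nonneg _)
  calc |likelihoodDeriv k c h|
      = √(2 * π) ^ k *
          (|evalReal₂ (likelihoodPoly k) c h| * exp (k * c ^ 2 / 2 + h * c - h ^ 2 / 2)) := by
        rw [likelihoodDeriv, abs_mul, abs_mul, abs_of_nonneg (by positivity : 0 ≤ √(2 * π) ^ k),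
          abs_of_pos (exp_pos _)]
    _ ≤ √(2 * π) ^ k * (|evalReal₂ (likelihoodPoly k) c h| *
          (exp (k * C ^ 2 / 2) * exp (h * C - h ^ 2 / 2))) := by gcongr
    _ = √(2 * π) ^ k * exp (k * C ^ 2 / 2) *
          (|evalReal₂ (likelihoodPoly k) c h| * exp (h * C - h ^ 2 / 2)) := by ring
    _ ≤ √(2 * π) ^ k * exp (k * C ^ 2 / 2) * M := by gcongr

section Integral

variable {Pi : Measure ℝ} [IsFiniteMeasure Pi] (hPi : ∀ᵐ h ∂Pi, 0 ≤ h)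
  {cv : ℝ → ℝ} (hcv : ∀ p ∈ Set.Ioo (0 : ℝ) 1, stdNormalCdf (cv p) = 1 - p)
include hPi hcv

theorem hasDerivAt_integral_likelihoodDeriv (k : ℕ) {p : ℝ} (hp : p ∈ Set.Ioo (0 : ℝ) 1) :
    HasDerivAt (fun x => ∫ h, likelihoodDeriv k (cv x) h ∂Pi)
      (-∫ h, likelihoodDeriv (k + 1) (cv p) h ∂Pi) p := by
  have hcv_deriv := fun {x} (hx : x ∈ Set.Ioo (0 : ℝ) 1) =>
    hasDerivAt_of_stdNormalCdf_eq_one_sub hcv hx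
  obtain ⟨ε, hε, hball⟩ : ∃ ε > 0, ∀ x ∈ Metric.ball p ε,
      x ∈ Set.Ioo (0 : ℝ) 1 ∧ |cv x| < |cv p| + 1 :=
    Metric.eventually_nhds_iff_ball.mp <| (isOpen_Ioo.eventually_mem hp).and <|
      (continuous_abs.continuousAt.comp (hcv_deriv hp).continuousAt).eventually_lt
        continuousAt_const (lt_add_one _)
  obtain ⟨M, hM⟩ := exists_abs_likelihoodDeriv_le (k + 1) (|cv p| + 1)
  obtain ⟨M₀, hM₀⟩ := exists_abs_likelihoodDeriv_le k (|cv p| + 1)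
  have hint : Integrable (likelihoodDeriv k (cv p)) Pi :=
    (integrable_const M₀).mono' (continuous_likelihoodDeriv k (cv p)).aestronglyMeasurable
      (hPi.mono fun h hh => hM₀ _ h (hball p (Metric.mem_ball_self hε)).2.le hh)
  have hbound : ∀ᵐ h ∂Pi, ∀ x ∈ Metric.ball p ε, ‖-likelihoodDeriv (k + 1) (cv x) h‖ ≤ M :=
    hPi.mono fun h hh x hx => by rw [norm_neg]; exact hM _ h (hball x hx).2.le hh
  have hderiv : ∀ᵐ h ∂Pi, ∀ x ∈ Metric.ball p ε,
      HasDerivAt (fun x => likelihoodDeriv k (cv x) h) (-likelihoodDeriv (k + 1) (cv x) h) x := by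
    refine Filter.Eventually.of_forall fun h x hx => ?_
    refine ((hasDerivAt_likelihoodDeriv k (cv x) h).comp x
      (hcv_deriv (hball x hx).1)).congr_deriv ?_
    field_simp [(stdNormalPdf_pos (cv x)).ne']
  have := hasDerivAt_integral_of_dominated_loc_of_deriv_le (Metric.ball_mem_nhds p hε)
    (Filter.Eventually.of_forall fun x =>
      (continuous_likelihoodDeriv k (cv x)).aestronglyMeasurable)
    hint (continuous_likelihoodDeriv (k + 1) (cv p)).neg.aestronglyMeasurable hbound
    (integrable_const M) hderiv
  simpa only [integral_neg] using this.2

theorem iteratedDeriv_eq_integral_likelihoodDeriv {g : ℝ → ℝ}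
    (hg : ∀ p ∈ Set.Ioo (0 : ℝ) 1, g p = ∫ h, exp (h * cv p - h ^ 2 / 2) ∂Pi) (k : ℕ) :
    ∀ p ∈ Set.Ioo (0 : ℝ) 1,
      iteratedDeriv k g p = (-1) ^ k * ∫ h, likelihoodDeriv k (cv p) h ∂Pi := by
  induction k with
  | zero =>
    intro p hp
    simp only [iteratedDeriv_zero, pow_zero, one_mul, likelihoodDeriv_zero, hg p hp]
  | succ k ih =>
    intro p hp
    have hloc : iteratedDeriv k g =ᶠ[nhds p]
        fun x => (-1) ^ k * ∫ h, likelihoodDeriv k (cv x) h ∂Pi :=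
      Filter.eventually_of_mem (isOpen_Ioo.mem_nhds hp) ih
    rw [iteratedDeriv_succ, hloc.deriv_eq,
      ((hasDerivAt_integral_likelihoodDeriv hPi hcv k hp).const_mul _).deriv, pow_succ]
    ring

end Integral

/-- if Π is a probability measure on [0,∞) (modeled as a probability
measure on ℝ giving no mass to (−∞,0)), cv₁(p) = Φ⁻¹(1−p) on (0,1), and
g₁(p) = ∫ exp(h·cv₁(p) − h²/2) dΠ(h), then g₁ is completely monotone on (0, 1/2]:
for every integer k ≥ 0 and every p ∈ (0, 1/2], 0 ≤ (−1)^k g₁^{(k)}(p). -/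
theorem stmt_5
    (Pi : Measure ℝ) [IsProbabilityMeasure Pi] (hPi : Pi (Set.Iio 0) = 0)
    (cv : ℝ → ℝ) (hcv : ∀ p ∈ Set.Ioo (0 : ℝ) 1, stdNormalCdf (cv p) = 1 - p)
    (g₁ : ℝ → ℝ)
    (hg₁ : ∀ p : ℝ, g₁ p = ∫ h, Real.exp (h * cv p - h ^ 2 / 2) ∂Pi) :
    ∀ k : ℕ, ∀ p ∈ Set.Ioc (0 : ℝ) (1 / 2),
      0 ≤ (-1 : ℝ) ^ k * iteratedDeriv k g₁ p := by
  intro k p hp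
  have hp01 : p ∈ Set.Ioo (0 : ℝ) 1 := ⟨hp.1, hp.2.trans_lt (by norm_num)⟩
  have hPi_nonneg : ∀ᵐ h ∂Pi, 0 ≤ h := ae_iff.mpr (by simp only [not_le]; exact hPi)
  have hcv_nonneg : 0 ≤ cv p :=
    nonneg_of_half_le_stdNormalCdf (by rw [hcv p hp01]; linarith [hp.2])
  rw [iteratedDeriv_eq_integral_likelihoodDeriv hPi_nonneg hcv (fun p _ => hg₁ p) k p hp01,
    ← mul_assoc, ← mul_pow, neg_one_mul, neg_neg, one_pow, one_mul]
  exact integral_nonneg_of_ae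
    (hPi_nonneg.mono fun h hh => likelihoodDeriv_nonneg k hcv_nonneg hh)
end

section
/- Let g : (0,1) → [0,∞) be a non-increasing function, let G(p) = ∫_0^p g(t) dt, and assume G(p) ≤ 1 for all p ∈ (0,1). Then for every integer M ≥ 1, the function p ↦ M·(1 − G(p))^{M−1}·g(p) is non-increasing on (0,1). Moreover, if g is completely monotone on (0,1) (in particular infinitely differentiable), then p ↦ M·(1 − G(p))^{M−1}·g(p) is completely monotone on (0,1). -/
/-! Since `g ≥ 0` and `G ≤ 1`, the factor `1 - G` is nonnegative and non-increasing, so the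
density is a product of nonnegative non-increasing functions. If `g` is completely monotone, then
`1 - G`, being nonnegative with derivative `-g`, is completely monotone too, and complete
monotonicity is preserved by products (Leibniz's rule), hence by powers. -/

open MeasureTheory Set
open scoped ContDiff

def CompletelyMonotoneOn (s : Set ℝ) (f : ℝ → ℝ) : Prop :=
  ContDiffOn ℝ ∞ f s ∧ ∀ k : ℕ, ∀ x ∈ s, 0 ≤ (-1 : ℝ) ^ k * iteratedDeriv k f x

namespace CompletelyMonotoneOn

variable {s : Set ℝ} {f g : ℝ → ℝ}

theorem const {c : ℝ} (hc : 0 ≤ c) : CompletelyMonotoneOn s fun _ => c := by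
  refine ⟨contDiffOn_const, fun k x _ => ?_⟩
  rw [iteratedDeriv_const]
  split_ifs with hk
  · simpa [hk] using hc
  · simp

theorem mul (hs : IsOpen s) (hf : CompletelyMonotoneOn s f) (hg : CompletelyMonotoneOn s g) :
    CompletelyMonotoneOn s fun x => f x * g x := by
  refine ⟨hf.1.mul hg.1, fun k x hx => ?_⟩
  have hfx := (hf.1.contDiffAt (hs.mem_nhds hx)).of_le (m := k) (mod_cast le_top)
  have hgx := (hg.1.contDiffAt (hs.mem_nhds hx)).of_le (m := k) (mod_cast le_top)
  rw [iteratedDeriv_fun_mul hfx hgx, Finset.mul_sum]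
  refine Finset.sum_nonneg fun i hi => ?_
  have hsign : (-1 : ℝ) ^ k = (-1) ^ i * (-1) ^ (k - i) := by
    rw [← pow_add, Nat.add_sub_cancel' (Nat.lt_succ_iff.1 (Finset.mem_range.1 hi))]
  calc (0 : ℝ) ≤ k.choose i * ((-1) ^ i * iteratedDeriv i f x) *
        ((-1) ^ (k - i) * iteratedDeriv (k - i) g x) :=
        mul_nonneg (mul_nonneg (Nat.cast_nonneg _) (hf.2 i x hx)) (hg.2 _ x hx)
    _ = _ := by rw [hsign]; ring

theorem pow (hs : IsOpen s) (hf : CompletelyMonotoneOn s f) (n : ℕ) :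
    CompletelyMonotoneOn s fun x => f x ^ n := by
  induction n with
  | zero => simpa only [pow_zero] using const zero_le_one
  | succ n ih => simpa only [pow_succ] using ih.mul hs hf

theorem of_hasDerivAt_neg (hs : IsOpen s) (hf₀ : ∀ x ∈ s, 0 ≤ f x)
    (hf' : ∀ x ∈ s, HasDerivAt f (-g x) x) (hg : CompletelyMonotoneOn s g) :
    CompletelyMonotoneOn s f := by
  have hderiv : EqOn (deriv f) (fun x => -g x) s := fun x hx => (hf' x hx).deriv
  refine ⟨(contDiffOn_infty_iff_deriv_of_isOpen hs).2
    ⟨fun x hx => (hf' x hx).differentiableAt.differentiableWithinAt, hg.1.neg.congr hderiv⟩,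
    fun k x hx => ?_⟩
  cases k with
  | zero => simpa using hf₀ x hx
  | succ k =>
    rw [iteratedDeriv_succ', hderiv.iteratedDeriv_of_isOpen hs k hx, iteratedDeriv_fun_neg]
    simpa [pow_succ] using hg.2 k x hx

end CompletelyMonotoneOn

theorem AntitoneOn.mul_of_nonneg {α : Type*} [Preorder α] {s : Set α} {f g : α → ℝ}
    (hf : AntitoneOn f s) (hg : AntitoneOn g s) (hf₀ : ∀ x ∈ s, 0 ≤ f x)
    (hg₀ : ∀ x ∈ s, 0 ≤ g x) : AntitoneOn (f * g) s :=
  fun _ ha _ hb h => mul_le_mul (hf ha hb h) (hg ha hb h) (hg₀ _ hb) (hf₀ _ ha)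

theorem antitoneOn_one_sub_pow {α : Type*} [Preorder α] {s : Set α} {F : α → ℝ}
    (hF : MonotoneOn F s) (hF₁ : ∀ x ∈ s, F x ≤ 1) (n : ℕ) :
    AntitoneOn (fun x => (1 - F x) ^ n) s :=
  fun _ ha _ hb h =>
    pow_le_pow_left₀ (sub_nonneg.2 (hF₁ _ hb)) (sub_le_sub_left (hF ha hb h) 1) n

theorem monotoneOn_intervalIntegral_of_nonneg {g : ℝ → ℝ} {a b : ℝ}
    (hint : ∀ p ∈ Ioo a b, IntervalIntegrable g volume a p)
    (hg₀ : ∀ p ∈ Ioo a b, 0 ≤ g p) :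
    MonotoneOn (fun p => ∫ t in a..p, g t) (Ioo a b) := by
  intro p hp q hq hpq
  rw [← sub_nonneg, intervalIntegral.integral_interval_sub_left (hint q hq) (hint p hp)]
  exact intervalIntegral.integral_nonneg hpq
    fun t ht => hg₀ t ⟨hp.1.trans_le ht.1, ht.2.trans_lt hq.2⟩

/-- let g be a non-increasing, nonnegative function on (0,1), let
G(p) = ∫_0^p g(t) dt with G(p) ≤ 1 on (0,1). Then for every integer M ≥ 1 the function
p ↦ M·(1 − G(p))^{M−1}·g(p) is non-increasing on (0,1); moreover, if g is completely
monotone on (0,1) (in particular infinitely differentiable there), then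
p ↦ M·(1 − G(p))^{M−1}·g(p) is completely monotone on (0,1). -/
theorem stmt_18
    (g G : ℝ → ℝ)
    (hg_anti : AntitoneOn g (Set.Ioo 0 1))
    (hg_nonneg : ∀ p ∈ Set.Ioo (0 : ℝ) 1, 0 ≤ g p)
    (hg_int : ∀ p ∈ Set.Ioo (0 : ℝ) 1, IntervalIntegrable g volume 0 p)
    (hG : ∀ p : ℝ, G p = ∫ t in (0 : ℝ)..p, g t)
    (hG_le : ∀ p ∈ Set.Ioo (0 : ℝ) 1, G p ≤ 1) :
    (∀ M : ℕ, 1 ≤ M →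
      AntitoneOn (fun p => (M : ℝ) * (1 - G p) ^ (M - 1) * g p) (Set.Ioo 0 1)) ∧
    (ContDiffOn ℝ (⊤ : ℕ∞) g (Set.Ioo 0 1) →
      (∀ k : ℕ, ∀ p ∈ Set.Ioo (0 : ℝ) 1, 0 ≤ (-1 : ℝ) ^ k * iteratedDeriv k g p) →
      ∀ M : ℕ, 1 ≤ M → ∀ k : ℕ, ∀ p ∈ Set.Ioo (0 : ℝ) 1,
        0 ≤ (-1 : ℝ) ^ k *
          iteratedDeriv k (fun q => (M : ℝ) * (1 - G q) ^ (M - 1) * g q) p) := by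
  have hG_eq : G = fun p => ∫ t in (0 : ℝ)..p, g t := funext hG
  have hG_mono : MonotoneOn G (Ioo 0 1) :=
    hG_eq ▸ monotoneOn_intervalIntegral_of_nonneg hg_int hg_nonneg
  have h1G₀ : ∀ p ∈ Ioo (0 : ℝ) 1, 0 ≤ 1 - G p := fun p hp => sub_nonneg.2 (hG_le p hp)
  refine ⟨fun M _ => ?_, fun hsmooth hcm M _ => ?_⟩
  · exact (antitoneOn_const.mul_of_nonneg (antitoneOn_one_sub_pow hG_mono hG_le _)
      (fun _ _ => M.cast_nonneg) fun p hp => pow_nonneg (h1G₀ p hp) _).mul_of_nonneg hg_anti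
      (fun p hp => mul_nonneg M.cast_nonneg (pow_nonneg (h1G₀ p hp) _)) hg_nonneg
  · have hg : CompletelyMonotoneOn (Ioo 0 1) g := ⟨hsmooth, hcm⟩
    have hG' : ∀ p ∈ Ioo (0 : ℝ) 1, HasDerivAt (fun q => 1 - G q) (-g p) p := fun p hp => by
      rw [hG_eq]
      exact (intervalIntegral.integral_hasDerivAt_right (hg_int p hp)
        (hsmooth.continuousOn.stronglyMeasurableAtFilter isOpen_Ioo p hp)
        (hsmooth.continuousOn.continuousAt (isOpen_Ioo.mem_nhds hp))).const_sub 1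
    have h1G := CompletelyMonotoneOn.of_hasDerivAt_neg isOpen_Ioo h1G₀ hG' hg
    exact (((CompletelyMonotoneOn.const M.cast_nonneg).mul isOpen_Ioo
      (h1G.pow isOpen_Ioo _)).mul isOpen_Ioo hg).2
end
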